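/- Assume Assumption 1 and let g* be an optimal Equal Opportunity classifier. For each n, let (T_n, Q_n) be a probability space and let η̂_n : T_n × ℝ^d × {0,1} → [0,1] be jointly measurable such that: (i) for each s ∈ {0,1}, ∫ E_{X|S=s}|η(X,s) − η̂_n(τ,X,s)| dQ_n(τ) → 0 as n → ∞; (ii) for Q_n-almost every τ and each s, m̂_s(τ) := E_{X|S=s}[η̂_n(τ,X,s)] > 0; and (iii) there exist measurable maps θ̃_n : T_n → [−2,2] such that for Q_n-almost every τ the classifier g̃_n^τ defined by g̃_n^τ(x,1) := 1{ℙ(S=1)(2η̂_n(τ,x,1)−1) − θ̃_n(τ)·η̂_n(τ,x,1)/m̂_1(τ) ≥ 0} and g̃_n^τ(x,0) := 1{ℙ(S=0)(2η̂_n(τ,x,0)−1) + θ̃_n(τ)·η̂_n(τ,x,0)/m̂_0(τ) ≥ 0} satisfies E_{X|S=1}[η̂_n(τ,X,1)·g̃_n^τ(X,1)]/m̂_1(τ) = E_{X|S=0}[η̂_n(τ,X,0)·g̃_n^τ(X,0)]/m̂_0(τ). Then limsup_{n→∞} ∫ R(g̃_n^τ) dQ_n(τ) ≤ R(g*). -/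

import Mathlib

/-!
Fix a fair classifier `g` and write `p_s = P(S = s)`, `m_s = E_s η`, `Δ_s = E_s |η - η̂|`. The risk
is `R(c) = P(Y = 1) - ∑ s, p_s E_s[(2η - 1) c]`, and fairness of `c` says that the true positive
rates `E_s[η c] / m_s` agree across the two groups. In each group the pseudo-oracle `G` maximises
pointwise the plug-in Lagrangian `p_s E_s[(2η̂ - 1) c] ∓ θ E_s[η̂ c] / m̂_s`. Its Lagrange terms
cancel across the groups exactly at `G` (balance condition) and up to `O(Δ_s / m_s)` at `g`
(fairness, `|θ| ≤ 2`), while replacing `η̂` by `η` costs `O(Δ_s)`. Hence, for every sample,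
`R(G) ≤ R(g) + ∑ s, (4 + 4 / m_s) Δ_s`; integrating over the sample and using L¹-consistency of
`η̂` gives the claim.
-/

open MeasureTheory ProbabilityTheory Set Filter

namespace EqualOpportunity

noncomputable def ind (b : Bool) : ℝ := if b then 1 else 0

@[simp] lemma ind_true : ind true = 1 := rfl
@[simp] lemma ind_false : ind false = 0 := rfl

lemma ind_mem_Icc (b : Bool) : ind b ∈ Icc (0 : ℝ) 1 := by cases b <;> simp

lemma abs_ind_le_one (b : Bool) : |ind b| ≤ 1 := by cases b <;> simp

lemma measurable_ind : Measurable ind := measurable_from_top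

lemma limsup_le_of_le_add_of_tendsto_zero {a c : ℕ → ℝ} {b : ℝ} (ha : ∀ n, 0 ≤ a n)
    (hac : ∀ n, a n ≤ b + c n) (hc : Tendsto c atTop (nhds 0)) : limsup a atTop ≤ b := by
  have hbc : Tendsto (fun n => b + c n) atTop (nhds b) := by
    simpa using tendsto_const_nhds.add hc
  calc limsup a atTop ≤ limsup (fun n => b + c n) atTop :=
        limsup_le_limsup (.of_forall hac) (isCoboundedUnder_le_of_le _ ha) hbc.isBoundedUnder_le
    _ = b := hbc.limsup_eq

lemma abs_div_sub_div_le {u v m m' Δ : ℝ} (hm : 0 < m) (hm' : 0 < m') (hu : 0 ≤ u) (hum : u ≤ m')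
    (hmm : |m - m'| ≤ Δ) (huv : |u - v| ≤ Δ) :
    |u / m' - v / m| ≤ 2 * Δ / m := by
  have hdecomp : u / m' - v / m = u / m' * ((m - m') / m) + (u - v) / m := by
    field_simp; ring
  have hratio : |u / m'| ≤ 1 := by
    rw [abs_of_nonneg (div_nonneg hu hm'.le)]; exact div_le_one_of_le₀ hum hm'.le
  calc |u / m' - v / m| ≤ |u / m' * ((m - m') / m)| + |(u - v) / m| := by
        rw [hdecomp]; exact abs_add_le _ _
    _ = |u / m'| * (|m - m'| / m) + |u - v| / m := by
        rw [abs_mul, abs_div (m - m'), abs_div (u - v), abs_of_pos hm]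
    _ ≤ 1 * (Δ / m) + Δ / m := by gcongr
    _ = 2 * Δ / m := by ring

section Integrals

variable {Ω : Type*} [MeasurableSpace Ω] {μ : Measure Ω}

lemma integrable_mul_ind {f : Ω → ℝ} (hf : Integrable f μ) {c : Ω → Bool} (hc : Measurable c) :
    Integrable (fun ω => f ω * ind (c ω)) μ :=
  hf.mul_bdd (measurable_ind.comp hc).aestronglyMeasurable (ae_of_all _ fun _ => abs_ind_le_one _)

lemma abs_integral_mul_ind_sub_le {e f : Ω → ℝ} (he : Integrable e μ) (hf : Integrable f μ)
    {c : Ω → Bool} (hc : Measurable c) :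
    |∫ ω, f ω * ind (c ω) ∂μ - ∫ ω, e ω * ind (c ω) ∂μ| ≤ ∫ ω, |e ω - f ω| ∂μ := by
  rw [← integral_sub (integrable_mul_ind hf hc) (integrable_mul_ind he hc)]
  refine abs_integral_le_integral_abs.trans <| integral_mono
    ((integrable_mul_ind hf hc).sub (integrable_mul_ind he hc)).abs (he.sub hf).abs fun ω => ?_
  obtain ⟨h0, h1⟩ := ind_mem_Icc (c ω)
  rw [← sub_mul, abs_mul, abs_sub_comm, abs_of_nonneg h0]
  exact mul_le_of_le_one_right (abs_nonneg _) h1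

lemma integral_mul_ind_le_of_iff {a : Ω → ℝ} (ha : Integrable a μ) {c G : Ω → Bool}
    (hc : Measurable c) (hG : Measurable G) (hGa : ∀ ω, G ω = true ↔ 0 ≤ a ω) :
    ∫ ω, a ω * ind (c ω) ∂μ ≤ ∫ ω, a ω * ind (G ω) ∂μ := by
  refine integral_mono (integrable_mul_ind ha hc) (integrable_mul_ind ha hG) fun ω => ?_
  cases hGω : G ω
  · have : a ω < 0 := by simpa [hGω] using hGa ω
    cases c ω <;> simp [this.le]
  · have : 0 ≤ a ω := (hGa ω).1 hGω
    cases c ω <;> simp [this]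

lemma integral_affine_mul {a φ : Ω → ℝ} (haφ : Integrable (fun ω => a ω * φ ω) μ)
    (hφ : Integrable φ μ) :
    ∫ ω, (2 * a ω - 1) * φ ω ∂μ = 2 * ∫ ω, a ω * φ ω ∂μ - ∫ ω, φ ω ∂μ := by
  simp_rw [sub_mul, one_mul, mul_assoc]
  rw [integral_sub (haφ.const_mul 2) hφ, integral_const_mul]

lemma toReal_measure_mul_integral_cond [IsFiniteMeasure μ] (s : Set Ω) (f : Ω → ℝ) :
    (μ s).toReal * ∫ ω, f ω ∂μ[|s] = ∫ ω in s, f ω ∂μ := by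
  rw [ProbabilityTheory.cond, integral_smul_measure, smul_eq_mul, ← mul_assoc, ← ENNReal.toReal_mul]
  rcases eq_or_ne (μ s) 0 with h | h
  · simp [Measure.restrict_eq_zero.mpr h]
  · rw [ENNReal.mul_inv_cancel h (measure_ne_top μ s), ENNReal.toReal_one, one_mul]

lemma integral_ind_eq_toReal_measure {b : Ω → Bool} (hb : Measurable b) :
    ∫ ω, ind (b ω) ∂μ = (μ {ω | b ω = true}).toReal := by
  calc ∫ ω, ind (b ω) ∂μ = ∫ ω, (b ⁻¹' {true}).indicator 1 ω ∂μ := by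
        congr 1 with ω
        cases h : b ω <;> simp [ind, h]
    _ = _ := integral_indicator_one (hb (measurableSet_singleton true))

lemma integral_pos_of_measure_le_pos {f : Ω → ℝ} (hf0 : 0 ≤ f) (hfi : Integrable f μ) {a : ℝ}
    (ha : 0 < a) (h : 0 < μ {ω | a ≤ f ω}) : 0 < ∫ ω, f ω ∂μ := by
  rw [integral_pos_iff_support_of_nonneg hf0 hfi]
  exact h.trans_le (measure_mono fun ω hω => (ha.trans_le hω).ne')

lemma integral_le_add_sum_of_ae_le [IsProbabilityMeasure μ] {ι : Type*} [Fintype ι]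
    {r : Ω → ℝ} {Δ : ι → Ω → ℝ} {b : ℝ} {C : ι → ℝ} (hr : Integrable r μ)
    (hΔ : ∀ i, Integrable (Δ i) μ) (h : ∀ᵐ ω ∂μ, r ω ≤ b + ∑ i, C i * Δ i ω) :
    ∫ ω, r ω ∂μ ≤ b + ∑ i, C i * ∫ ω, Δ i ω ∂μ := by
  have hsum : Integrable (fun ω => ∑ i, C i * Δ i ω) μ :=
    integrable_finsetSum _ fun i _ => (hΔ i).const_mul (C i)
  have hrhs : Integrable (fun ω => b + ∑ i, C i * Δ i ω) μ := (integrable_const b).add hsum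
  refine (integral_mono_ae hr hrhs h).trans_eq ?_
  rw [integral_add (integrable_const b) hsum, integral_finsetSum _ fun i _ => (hΔ i).const_mul _]
  simp [integral_const_mul]

lemma measure_setOf_eq_ne_zero [IsProbabilityMeasure μ] {S : Ω → Bool} (hS : Measurable S)
    (h : 0 < μ {ω | S ω = true} ∧ μ {ω | S ω = true} < 1) (s : Bool) :
    μ {ω | S ω = s} ≠ 0 := by
  cases s
  · have hT : MeasurableSet {ω | S ω = true} := hS (measurableSet_singleton true)
    have hcompl : {ω | S ω = false} = {ω | S ω = true}ᶜ := by ext ω; simp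
    rw [hcompl, prob_compl_eq_one_sub hT]
    exact (tsub_pos_of_lt h.2).ne'
  · exact h.1.ne'

lemma integrable_integral_abs_sub [IsFiniteMeasure μ] {T : Type*} [MeasurableSpace T]
    (Q : Measure T) [IsFiniteMeasure Q] {e : Ω → ℝ} (he : Measurable e)
    (he01 : ∀ ω, e ω ∈ Icc (0 : ℝ) 1) {f : T → Ω → ℝ} (hf : Measurable fun p : T × Ω => f p.1 p.2)
    (hf01 : ∀ τ ω, f τ ω ∈ Icc (0 : ℝ) 1) :
    Integrable (fun τ => ∫ ω, |e ω - f τ ω| ∂μ) Q := by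
  have hmeas : StronglyMeasurable fun p : T × Ω => |e p.2 - f p.1 p.2| :=
    ((he.comp measurable_snd).sub hf).abs.stronglyMeasurable
  refine .of_bound hmeas.integral_prod_right'.aestronglyMeasurable (1 * μ.real univ)
    (ae_of_all _ fun τ => norm_integral_le_of_norm_le_const (ae_of_all _ fun ω => ?_))
  obtain ⟨h0, h1⟩ := he01 ω
  obtain ⟨i0, i1⟩ := hf01 τ ω
  rw [Real.norm_eq_abs, abs_abs, abs_le]
  constructor <;> linarith

end Integrals

section Group

variable {Ω : Type*} [MeasurableSpace Ω] {μ : Measure Ω} [IsFiniteMeasure μ] {e f : Ω → ℝ}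

lemma abs_integral_affine_mul_ind_sub_le (he : Integrable e μ) (hf : Integrable f μ)
    {c : Ω → Bool} (hc : Measurable c) :
    |∫ ω, (2 * f ω - 1) * ind (c ω) ∂μ - ∫ ω, (2 * e ω - 1) * ind (c ω) ∂μ|
      ≤ 2 * ∫ ω, |e ω - f ω| ∂μ := by
  have h := abs_integral_mul_ind_sub_le (e := fun ω => 2 * e ω - 1) (f := fun ω => 2 * f ω - 1)
    ((he.const_mul 2).sub (integrable_const 1)) ((hf.const_mul 2).sub (integrable_const 1)) hc
  have hrw : ∀ ω, |(2 * e ω - 1) - (2 * f ω - 1)| = 2 * |e ω - f ω| := fun ω => by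
    rw [← abs_two, ← abs_mul]; ring_nf
  simpa only [hrw, integral_const_mul] using h

lemma plug_in_score_le_of_threshold {p t : ℝ} (hfi : Integrable f μ) {c G : Ω → Bool}
    (hc : Measurable c) (hG : Measurable G)
    (hGdef : ∀ ω, G ω = true ↔ 0 ≤ p * (2 * f ω - 1) + t * f ω / ∫ ω', f ω' ∂μ) :
    p * ∫ ω, (2 * f ω - 1) * ind (c ω) ∂μ + t * ((∫ ω, f ω * ind (c ω) ∂μ) / ∫ ω, f ω ∂μ)
      ≤ p * ∫ ω, (2 * f ω - 1) * ind (G ω) ∂μ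
        + t * ((∫ ω, f ω * ind (G ω) ∂μ) / ∫ ω, f ω ∂μ) := by
  set m' := ∫ ω, f ω ∂μ
  have h2f : Integrable (fun ω => 2 * f ω - 1) μ := (hfi.const_mul 2).sub (integrable_const 1)
  have hlin : ∀ b : Ω → Bool, Measurable b →
      ∫ ω, (p * (2 * f ω - 1) + t * f ω / m') * ind (b ω) ∂μ
        = p * ∫ ω, (2 * f ω - 1) * ind (b ω) ∂μ + t * ((∫ ω, f ω * ind (b ω) ∂μ) / m') := by
    intro b hb
    have hrw : ∀ ω, (p * (2 * f ω - 1) + t * f ω / m') * ind (b ω)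
        = p * ((2 * f ω - 1) * ind (b ω)) + t / m' * (f ω * ind (b ω)) := fun ω => by ring
    simp_rw [hrw]
    rw [integral_add ((integrable_mul_ind h2f hb).const_mul p)
      ((integrable_mul_ind hfi hb).const_mul _), integral_const_mul, integral_const_mul]
    ring
  rw [← hlin c hc, ← hlin G hG]
  exact integral_mul_ind_le_of_iff ((h2f.const_mul p).add ((hfi.const_mul t).div_const m'))
    hc hG hGdef

theorem score_le_of_plug_in_threshold {p t : ℝ} (hp0 : 0 ≤ p) (hp1 : p ≤ 1) (ht : |t| ≤ 2)
    (he : Measurable e) (hf : Measurable f)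
    (he01 : ∀ ω, e ω ∈ Icc (0 : ℝ) 1) (hf01 : ∀ ω, f ω ∈ Icc (0 : ℝ) 1)
    (hm : 0 < ∫ ω, e ω ∂μ) (hm' : 0 < ∫ ω, f ω ∂μ)
    {c G : Ω → Bool} (hc : Measurable c) (hG : Measurable G)
    (hGdef : ∀ ω, G ω = true ↔ 0 ≤ p * (2 * f ω - 1) + t * f ω / ∫ ω', f ω' ∂μ) :
    p * ∫ ω, (2 * e ω - 1) * ind (c ω) ∂μ + t * ((∫ ω, e ω * ind (c ω) ∂μ) / ∫ ω, e ω ∂μ)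
      ≤ p * ∫ ω, (2 * e ω - 1) * ind (G ω) ∂μ + t * ((∫ ω, f ω * ind (G ω) ∂μ) / ∫ ω, f ω ∂μ)
        + (4 + 4 / ∫ ω, e ω ∂μ) * ∫ ω, |e ω - f ω| ∂μ := by
  set m := ∫ ω, e ω ∂μ
  set m' := ∫ ω, f ω ∂μ
  set Δ := ∫ ω, |e ω - f ω| ∂μ
  have hei : Integrable e μ := .of_mem_Icc 0 1 he.aemeasurable (ae_of_all _ he01)
  have hfi : Integrable f μ := .of_mem_Icc 0 1 hf.aemeasurable (ae_of_all _ hf01)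
  have hΔ : 0 ≤ Δ := integral_nonneg fun ω => abs_nonneg _
  have hU : |(∫ ω, f ω * ind (c ω) ∂μ) / m' - (∫ ω, e ω * ind (c ω) ∂μ) / m| ≤ 2 * Δ / m := by
    refine abs_div_sub_div_le hm hm'
      (integral_nonneg fun ω => mul_nonneg (hf01 ω).1 (ind_mem_Icc _).1)
      (integral_mono (integrable_mul_ind hfi hc) hfi fun ω =>
        mul_le_of_le_one_right (hf01 ω).1 (ind_mem_Icc _).2)
      ?_ (abs_integral_mul_ind_sub_le hei hfi hc)
    rw [← integral_sub hei hfi]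
    exact abs_integral_le_integral_abs
  have htU : t * ((∫ ω, e ω * ind (c ω) ∂μ) / m)
      ≤ t * ((∫ ω, f ω * ind (c ω) ∂μ) / m') + 2 * (2 * Δ / m) := by
    have h : |t * ((∫ ω, f ω * ind (c ω) ∂μ) / m' - (∫ ω, e ω * ind (c ω) ∂μ) / m)|
        ≤ 2 * (2 * Δ / m) := by
      rw [abs_mul]; exact mul_le_mul ht hU (abs_nonneg _) zero_le_two
    have := (abs_le.1 h).1
    rw [mul_sub] at this
    linarith
  have hopt := plug_in_score_le_of_threshold hfi hc hG hGdef
  have hweight : ∀ x y : ℝ, |x - y| ≤ 2 * Δ → p * y ≤ p * x + 2 * Δ := fun x y h => by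
    nlinarith [abs_le.1 h, mul_nonneg hp0 (by linarith [(abs_le.1 h).1] : 0 ≤ 2 * Δ - (y - x)),
      mul_nonneg (sub_nonneg.2 hp1) hΔ]
  have hVc := hweight _ _ (abs_integral_affine_mul_ind_sub_le hei hfi hc)
  have hVG := hweight _ _
    ((abs_sub_comm _ _).trans_le (abs_integral_affine_mul_ind_sub_le hei hfi hG))
  have hconst : (4 + 4 / m) * Δ = 2 * Δ + 2 * Δ + 2 * (2 * Δ / m) := by ring
  linarith

end Group

section Population

variable {Ω E : Type*} [MeasurableSpace Ω] [MeasurableSpace E] {P : Measure Ω}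
  {X : Ω → E} {S Y : Ω → Bool} {η : E → Bool → ℝ}

lemma integral_eq_sum_cond [IsFiniteMeasure P] (hS : Measurable S) {φ : Ω → Bool → ℝ}
    (hφ : Integrable (fun ω => φ ω (S ω)) P) :
    ∫ ω, φ ω (S ω) ∂P
      = ∑ s, (P {ω | S ω = s}).toReal * ∫ ω, φ ω s ∂P[|{ω | S ω = s}] := by
  simp_rw [toReal_measure_mul_integral_cond, Fintype.sum_bool]
  have hT : MeasurableSet {ω | S ω = true} := hS (measurableSet_singleton true)
  have hcompl : {ω | S ω = true}ᶜ = {ω | S ω = false} := by ext ω; simp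
  rw [← integral_add_compl hT hφ, hcompl]
  congr 1 <;>
    exact setIntegral_congr_fun (hS (measurableSet_singleton _)) fun ω hω => by rw [hω]

variable (P X S Y) in
noncomputable def risk (g : E → Bool → Bool) : ℝ := (P {ω | g (X ω) (S ω) ≠ Y ω}).toReal

variable (P X S Y η) in
def IsRegressionFunction : Prop :=
  ∀ φ : E × Bool → ℝ, Measurable φ → (∃ C, ∀ z, |φ z| ≤ C) →
    ∫ ω, ind (Y ω) * φ (X ω, S ω) ∂P = ∫ ω, η (X ω) (S ω) * φ (X ω, S ω) ∂P

lemma integral_two_ind_sub_one_mul_eq [IsFiniteMeasure P] (hX : Measurable X) (hS : Measurable S)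
    (hY : Measurable Y) (hη : Measurable fun z : E × Bool => η z.1 z.2)
    (hη01 : ∀ x s, η x s ∈ Icc (0 : ℝ) 1)
    (hreg : IsRegressionFunction P X S Y η)
    {φ : E × Bool → ℝ} (hφ : Measurable φ) {C : ℝ} (hφC : ∀ z, |φ z| ≤ C) :
    ∫ ω, (2 * ind (Y ω) - 1) * φ (X ω, S ω) ∂P
      = ∫ ω, (2 * η (X ω) (S ω) - 1) * φ (X ω, S ω) ∂P := by
  have hφi : Integrable (fun ω => φ (X ω, S ω)) P :=
    .of_bound (hφ.comp (hX.prodMk hS)).aestronglyMeasurable C (ae_of_all _ fun ω => hφC _)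
  have hbdd : ∀ {a : Ω → ℝ}, Measurable a → (∀ ω, a ω ∈ Icc (0 : ℝ) 1) →
      Integrable (fun ω => a ω * φ (X ω, S ω)) P := fun ha ha01 =>
    hφi.bdd_mul ha.aestronglyMeasurable (c := 1) (ae_of_all _ fun ω => by
      simpa [abs_of_nonneg (ha01 ω).1] using (ha01 ω).2)
  rw [integral_affine_mul (hbdd (a := fun ω => ind (Y ω)) (measurable_ind.comp hY)
      fun ω => ind_mem_Icc _) hφi,
    integral_affine_mul (hbdd (a := fun ω => η (X ω) (S ω)) (hη.comp (hX.prodMk hS))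
      fun ω => hη01 _ _) hφi,
    hreg φ hφ ⟨C, hφC⟩]

theorem risk_eq [IsFiniteMeasure P] (hX : Measurable X) (hS : Measurable S)
    (hY : Measurable Y) (hη : Measurable fun z : E × Bool => η z.1 z.2)
    (hη01 : ∀ x s, η x s ∈ Icc (0 : ℝ) 1) (hreg : IsRegressionFunction P X S Y η)
    {g : E → Bool → Bool} (hg : Measurable fun z : E × Bool => g z.1 z.2) :
    risk P X S Y g = (P {ω | Y ω = true}).toReal
      - ∑ s, (P {ω | S ω = s}).toReal
          * ∫ ω, (2 * η (X ω) s - 1) * ind (g (X ω) s) ∂P[|{ω | S ω = s}] := by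
  have hgXS : Measurable fun ω => g (X ω) (S ω) := hg.comp (hX.prodMk hS)
  have hpt : ∀ ω, ind (g (X ω) (S ω) != Y ω)
      = ind (Y ω) - (2 * ind (Y ω) - 1) * ind (g (X ω) (S ω)) := fun ω => by
    cases Y ω <;> cases g (X ω) (S ω) <;> norm_num
  have hbound : ∀ x s, |(2 * η x s - 1) * ind (g x s)| ≤ 1 := fun x s => by
    obtain ⟨h0, h1⟩ := hη01 x s
    obtain ⟨i0, i1⟩ := ind_mem_Icc (g x s)
    rw [abs_le]; constructor <;> nlinarith
  calc risk P X S Y g = ∫ ω, ind (g (X ω) (S ω) != Y ω) ∂P := by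
        rw [risk, integral_ind_eq_toReal_measure (by fun_prop)]; simp
    _ = ∫ ω, ind (Y ω) ∂P - ∫ ω, (2 * ind (Y ω) - 1) * ind (g (X ω) (S ω)) ∂P := by
        simp_rw [hpt]
        refine integral_sub (.of_mem_Icc 0 1 (measurable_ind.comp hY).aemeasurable
          (ae_of_all _ fun ω => ind_mem_Icc _)) (.of_mem_Icc (-1) 1 (by fun_prop) ?_)
        refine ae_of_all _ fun ω => ?_
        cases Y ω <;> cases g (X ω) (S ω) <;> norm_num
    _ = (P {ω | Y ω = true}).toReal - ∫ ω, (2 * η (X ω) (S ω) - 1) * ind (g (X ω) (S ω)) ∂P := by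
        rw [integral_ind_eq_toReal_measure hY,
          integral_two_ind_sub_one_mul_eq hX hS hY hη hη01 hreg (φ := fun z => ind (g z.1 z.2))
            (measurable_ind.comp hg) (C := 1) fun z => abs_ind_le_one _]
    _ = _ := by
        rw [integral_eq_sum_cond hS (φ := fun ω s => (2 * η (X ω) s - 1) * ind (g (X ω) s))]
        exact .of_bound (((hη.comp (hX.prodMk hS)).const_mul 2).sub_const 1 |>.mul
          (measurable_ind.comp hgXS)).aestronglyMeasurable 1 (ae_of_all _ fun ω => hbound _ _)

lemma toReal_measure_eq_mul_integral_cond [IsFiniteMeasure P] (hX : Measurable X)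
    (hS : Measurable S) (hY : Measurable Y) (hη : Measurable fun z : E × Bool => η z.1 z.2)
    (hη01 : ∀ x s, η x s ∈ Icc (0 : ℝ) 1) (hreg : IsRegressionFunction P X S Y η)
    {g : E → Bool → Bool} (hg : Measurable fun z : E × Bool => g z.1 z.2) (s : Bool) :
    (P {ω | S ω = s ∧ Y ω = true ∧ g (X ω) s = true}).toReal
      = (P {ω | S ω = s}).toReal * ∫ ω, η (X ω) s * ind (g (X ω) s) ∂P[|{ω | S ω = s}] := by
  set φ : E × Bool → ℝ := fun z => ind (z.2 == s && g z.1 s)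
  have hφ : Measurable φ := measurable_ind.comp (by fun_prop)
  have hset : {ω | S ω = s ∧ Y ω = true ∧ g (X ω) s = true}
      = {ω | (Y ω && (S ω == s && g (X ω) s)) = true} := by
    ext ω; simp only [mem_ofPred_eq, Bool.and_eq_true, beq_iff_eq]; tauto
  calc (P {ω | S ω = s ∧ Y ω = true ∧ g (X ω) s = true}).toReal
      = ∫ ω, ind (Y ω) * φ (X ω, S ω) ∂P := by
        rw [hset, ← integral_ind_eq_toReal_measure (by fun_prop)]
        congr 1 with ω
        cases Y ω <;> simp [φ]
    _ = ∫ ω, η (X ω) (S ω) * φ (X ω, S ω) ∂P := hreg φ hφ ⟨1, fun z => abs_ind_le_one _⟩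
    _ = _ := by
        rw [integral_eq_sum_cond hS (φ := fun ω s' => η (X ω) s' * φ (X ω, s'))]
        · cases s <;> simp [φ]
        · refine .of_mem_Icc 0 1
            ((hη.comp (hX.prodMk hS)).mul (hφ.comp (hX.prodMk hS))).aemeasurable
            (ae_of_all _ fun ω => ?_)
          obtain ⟨h0, h1⟩ := hη01 (X ω) (S ω)
          obtain ⟨i0, i1⟩ := ind_mem_Icc (S ω == s && g (X ω) s)
          exact ⟨mul_nonneg h0 i0, mul_le_one₀ h1 i0 i1⟩

lemma toReal_cond_eq_integral_div [IsFiniteMeasure P] (hX : Measurable X) (hS : Measurable S)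
    (hY : Measurable Y) (hη : Measurable fun z : E × Bool => η z.1 z.2)
    (hη01 : ∀ x s, η x s ∈ Icc (0 : ℝ) 1) (hreg : IsRegressionFunction P X S Y η)
    {g : E → Bool → Bool} (hg : Measurable fun z : E × Bool => g z.1 z.2) {s : Bool}
    (hs : P {ω | S ω = s} ≠ 0) :
    (P[{ω | g (X ω) (S ω) = true} | {ω | S ω = s ∧ Y ω = true}]).toReal
      = (∫ ω, η (X ω) s * ind (g (X ω) s) ∂P[|{ω | S ω = s}])
          / ∫ ω, η (X ω) s ∂P[|{ω | S ω = s}] := by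
  have hE : MeasurableSet {ω | S ω = s ∧ Y ω = true} :=
    (hS (measurableSet_singleton s)).inter (hY (measurableSet_singleton true))
  have hinter : {ω | S ω = s ∧ Y ω = true} ∩ {ω | g (X ω) (S ω) = true}
      = {ω | S ω = s ∧ Y ω = true ∧ g (X ω) s = true} := by
    ext ω
    simp only [mem_inter_iff, mem_ofPred_eq]
    constructor
    · rintro ⟨⟨rfl, hY⟩, hg⟩; exact ⟨rfl, hY, hg⟩
    · rintro ⟨rfl, hY, hg⟩; exact ⟨⟨rfl, hY⟩, hg⟩
  have hE_eq := toReal_measure_eq_mul_integral_cond hX hS hY hη hη01 hreg (g := fun _ _ => true)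
    measurable_const s
  simp only [and_true, ind_true, mul_one] at hE_eq
  rw [cond_apply hE, hinter, ENNReal.toReal_mul, ENNReal.toReal_inv,
    toReal_measure_eq_mul_integral_cond hX hS hY hη hη01 hreg hg, hE_eq, inv_mul_eq_div,
    mul_div_mul_left _ _ (ENNReal.toReal_ne_zero.2 ⟨hs, measure_ne_top _ _⟩)]

theorem risk_le_add_of_balanced [IsProbabilityMeasure P] (hX : Measurable X)
    (hS : Measurable S) (hY : Measurable Y) (hη : Measurable fun z : E × Bool => η z.1 z.2)
    (hη01 : ∀ x s, η x s ∈ Icc (0 : ℝ) 1) (hreg : IsRegressionFunction P X S Y η)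
    (hP : ∀ s, P {ω | S ω = s} ≠ 0) (hm : ∀ s, 0 < ∫ ω, η (X ω) s ∂P[|{ω | S ω = s}])
    {g : E → Bool → Bool} (hg : Measurable fun z : E × Bool => g z.1 z.2)
    (hgfair : P[{ω | g (X ω) (S ω) = true} | {ω | S ω = true ∧ Y ω = true}]
      = P[{ω | g (X ω) (S ω) = true} | {ω | S ω = false ∧ Y ω = true}])
    {f : E → Bool → ℝ} (hf : Measurable fun z : E × Bool => f z.1 z.2)
    (hf01 : ∀ x s, f x s ∈ Icc (0 : ℝ) 1) (hfpos : ∀ s, 0 < ∫ ω, f (X ω) s ∂P[|{ω | S ω = s}])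
    {θ : ℝ} (hθ : θ ∈ Icc (-2 : ℝ) 2)
    {G : E → Bool → Bool} (hG : Measurable fun z : E × Bool => G z.1 z.2)
    (hGdef : ∀ x,
      (G x true = true ↔ 0 ≤ (P {ω | S ω = true}).toReal * (2 * f x true - 1)
        - θ * f x true / ∫ ω, f (X ω) true ∂P[|{ω | S ω = true}])
      ∧ (G x false = true ↔ 0 ≤ (P {ω | S ω = false}).toReal * (2 * f x false - 1)
        + θ * f x false / ∫ ω, f (X ω) false ∂P[|{ω | S ω = false}]))
    (hbal : (∫ ω, f (X ω) true * ind (G (X ω) true) ∂P[|{ω | S ω = true}])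
        / ∫ ω, f (X ω) true ∂P[|{ω | S ω = true}]
      = (∫ ω, f (X ω) false * ind (G (X ω) false) ∂P[|{ω | S ω = false}])
        / ∫ ω, f (X ω) false ∂P[|{ω | S ω = false}]) :
    risk P X S Y G ≤ risk P X S Y g
      + ∑ s, (4 + 4 / ∫ ω, η (X ω) s ∂P[|{ω | S ω = s}])
          * ∫ ω, |η (X ω) s - f (X ω) s| ∂P[|{ω | S ω = s}] := by
  have hgroup : ∀ s t, |t| ≤ 2 → (∀ x, G x s = true ↔ 0 ≤ (P {ω | S ω = s}).toReal
      * (2 * f x s - 1) + t * f x s / ∫ ω, f (X ω) s ∂P[|{ω | S ω = s}]) → _ :=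
    fun s t ht hGs =>
    have := cond_isProbabilityMeasure (μ := P) (hP s)
    score_le_of_plug_in_threshold (e := fun ω => η (X ω) s) (f := fun ω => f (X ω) s)
      (c := fun ω => g (X ω) s) (G := fun ω => G (X ω) s)
      ENNReal.toReal_nonneg measureReal_le_one ht
      (hη.comp (hX.prodMk measurable_const)) (hf.comp (hX.prodMk measurable_const))
      (fun ω => hη01 _ _) (fun ω => hf01 _ _) (hm s) (hfpos s)
      (hg.comp (hX.prodMk measurable_const)) (hG.comp (hX.prodMk measurable_const))
      fun ω => hGs (X ω)
  have hT := hgroup true (-θ) (by rwa [abs_neg, abs_le]) fun x => by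
    rw [(hGdef x).1, neg_mul, neg_div, ← sub_eq_add_neg]
  have hF := hgroup false θ (abs_le.2 hθ) fun x => (hGdef x).2
  have hfair := congrArg ENNReal.toReal hgfair
  rw [toReal_cond_eq_integral_div hX hS hY hη hη01 hreg hg (hP true),
    toReal_cond_eq_integral_div hX hS hY hη hη01 hreg hg (hP false)] at hfair
  -- the `θ`-terms of the two groups now cancel
  rw [hfair, hbal] at hT
  rw [risk_eq hX hS hY hη hη01 hreg hG, risk_eq hX hS hY hη hη01 hreg hg]
  simp only [Fintype.sum_bool] at hT hF ⊢
  linarith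

lemma integrable_risk [IsProbabilityMeasure P] {T : Type*} [MeasurableSpace T]
    (Q : Measure T) [IsFiniteMeasure Q] (hX : Measurable X) (hS : Measurable S)
    (hY : Measurable Y) {G : T → E → Bool → Bool}
    (hG : Measurable fun p : T × (E × Bool) => G p.1 p.2.1 p.2.2) :
    Integrable (fun τ => risk P X S Y (G τ)) Q := by
  have hset : MeasurableSet {p : T × Ω | G p.1 (X p.2) (S p.2) ≠ Y p.2} :=
    (measurableSet_eq_fun (hG.comp (measurable_fst.prodMk
      ((hX.comp measurable_snd).prodMk (hS.comp measurable_snd)))) (hY.comp measurable_snd)).compl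
  exact .of_mem_Icc 0 1 (measurable_measure_prodMk_left hset).ennreal_toReal.aemeasurable
    (ae_of_all _ fun τ => ⟨ENNReal.toReal_nonneg, measureReal_le_one⟩)

end Population

end EqualOpportunity

open EqualOpportunity in
theorem stmt_18_general {d : ℕ} {Ω : Type*} [MeasurableSpace Ω]
    (P : Measure Ω) [IsProbabilityMeasure P]
    (X : Ω → (Fin d → ℝ)) (S Y : Ω → Bool)
    (hX : Measurable X) (hS : Measurable S) (hY : Measurable Y)
    (hSnd : 0 < P {ω | S ω = true} ∧ P {ω | S ω = true} < 1)
    (η : (Fin d → ℝ) → Bool → ℝ)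
    (hηm : Measurable (fun p : (Fin d → ℝ) × Bool => η p.1 p.2))
    (hη01 : ∀ x s, η x s ∈ Icc (0:ℝ) 1)
    (hreg : ∀ φ : (Fin d → ℝ) × Bool → ℝ, Measurable φ → (∃ C, ∀ z, |φ z| ≤ C) →
      ∫ ω, (if Y ω then (1:ℝ) else 0) * φ (X ω, S ω) ∂P
        = ∫ ω, η (X ω) (S ω) * φ (X ω, S ω) ∂P)
    -- Assumption 1
    (hhalf : ∀ s : Bool,
      0 < ProbabilityTheory.cond P {ω | S ω = s} {ω | 1 / 2 ≤ η (X ω) s})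
    -- an optimal Equal Opportunity classifier g*
    (gs : (Fin d → ℝ) → Bool → Bool)
    (hgsm : Measurable (fun p : (Fin d → ℝ) × Bool => gs p.1 p.2))
    (hgsfair :
      ProbabilityTheory.cond P {ω | S ω = true ∧ Y ω = true} {ω | gs (X ω) (S ω) = true}
        = ProbabilityTheory.cond P {ω | S ω = false ∧ Y ω = true}
            {ω | gs (X ω) (S ω) = true})
    -- the sequence of training-sample spaces and estimators
    (T : ℕ → Type*) [∀ n, MeasurableSpace (T n)]
    (Q : ∀ n, Measure (T n)) (hQ : ∀ n, IsProbabilityMeasure (Q n))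
    (ηh : ∀ n, T n → (Fin d → ℝ) → Bool → ℝ)
    (hηhm : ∀ n, Measurable (fun p : T n × ((Fin d → ℝ) × Bool) => ηh n p.1 p.2.1 p.2.2))
    (hηh01 : ∀ n τ x s, ηh n τ x s ∈ Icc (0:ℝ) 1)
    -- (i) L¹-consistency
    (hL1 : ∀ s : Bool, Tendsto
      (fun n => ∫ τ, (∫ ω, |η (X ω) s - ηh n τ (X ω) s|
          ∂(ProbabilityTheory.cond P {ω | S ω = s})) ∂(Q n))
      atTop (nhds 0))
    -- (ii) a.e. positivity of the estimated conditional means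
    (hpos : ∀ n, ∀ᵐ τ ∂(Q n), ∀ s : Bool,
      0 < ∫ ω, ηh n τ (X ω) s ∂(ProbabilityTheory.cond P {ω | S ω = s}))
    -- (iii) the thresholds and pseudo-oracle classifiers
    (θt : ∀ n, T n → ℝ)
    (hθtb : ∀ n τ, θt n τ ∈ Icc (-2 : ℝ) 2)
    (G : ∀ n, T n → (Fin d → ℝ) → Bool → Bool)
    (hGm : ∀ n, Measurable (fun p : T n × ((Fin d → ℝ) × Bool) => G n p.1 p.2.1 p.2.2))
    (hGdef : ∀ n τ x,
      (G n τ x true = true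
        ↔ 0 ≤ (P {ω | S ω = true}).toReal * (2 * ηh n τ x true - 1)
            - θt n τ * ηh n τ x true
              / (∫ ω, ηh n τ (X ω) true ∂(ProbabilityTheory.cond P {ω | S ω = true})))
      ∧ (G n τ x false = true
        ↔ 0 ≤ (P {ω | S ω = false}).toReal * (2 * ηh n τ x false - 1)
            + θt n τ * ηh n τ x false
              / (∫ ω, ηh n τ (X ω) false ∂(ProbabilityTheory.cond P {ω | S ω = false}))))
    (hbal : ∀ n, ∀ᵐ τ ∂(Q n),
      (∫ ω, ηh n τ (X ω) true * (if G n τ (X ω) true then (1:ℝ) else 0)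
          ∂(ProbabilityTheory.cond P {ω | S ω = true}))
        / (∫ ω, ηh n τ (X ω) true ∂(ProbabilityTheory.cond P {ω | S ω = true}))
      = (∫ ω, ηh n τ (X ω) false * (if G n τ (X ω) false then (1:ℝ) else 0)
          ∂(ProbabilityTheory.cond P {ω | S ω = false}))
        / (∫ ω, ηh n τ (X ω) false ∂(ProbabilityTheory.cond P {ω | S ω = false}))) :
    limsup (fun n => ∫ τ, (P {ω | G n τ (X ω) (S ω) ≠ Y ω}).toReal ∂(Q n)) atTop
      ≤ (P {ω | gs (X ω) (S ω) ≠ Y ω}).toReal := by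
  have hP := measure_setOf_eq_ne_zero hS hSnd
  have hm : ∀ s, 0 < ∫ ω, η (X ω) s ∂P[|{ω | S ω = s}] := fun s =>
    have := cond_isProbabilityMeasure (μ := P) (hP s)
    integral_pos_of_measure_le_pos (fun ω => (hη01 _ _).1)
      (.of_mem_Icc 0 1 (hηm.comp (hX.prodMk measurable_const)).aemeasurable
        (ae_of_all _ fun ω => hη01 _ _)) one_half_pos (hhalf s)
  refine limsup_le_of_le_add_of_tendsto_zero
    (fun n => integral_nonneg fun τ => ENNReal.toReal_nonneg) (fun n => ?_)
    (by simpa only [mul_zero, Finset.sum_const_zero] using tendsto_finsetSum Finset.univ fun s _ =>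
      (hL1 s).const_mul (4 + 4 / ∫ ω, η (X ω) s ∂P[|{ω | S ω = s}]))
  have := hQ n
  refine integral_le_add_sum_of_ae_le (integrable_risk (P := P) (Q n) hX hS hY (hGm n))
    (fun s => integrable_integral_abs_sub (μ := P[|{ω | S ω = s}]) (e := fun ω => η (X ω) s)
      (f := fun τ ω => ηh n τ (X ω) s) (Q n) (hηm.comp (hX.prodMk measurable_const))
      (fun ω => hη01 _ _) ((hηhm n).comp (measurable_fst.prodMk
        ((hX.comp measurable_snd).prodMk measurable_const))) fun τ ω => hηh01 n τ _ _) ?_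
  filter_upwards [hpos n, hbal n] with τ hτpos hτbal
  exact risk_le_add_of_balanced hX hS hY hηm hη01 hreg hP hm hgsm hgsfair
    ((hηhm n).comp measurable_prodMk_left) (hηh01 n τ) hτpos (hθtb n τ)
    ((hGm n).comp measurable_prodMk_left) (hGdef n τ) hτbal

theorem stmt_18 {d : ℕ} {Ω : Type*} [MeasurableSpace Ω]
    (P : Measure Ω) [IsProbabilityMeasure P]
    (X : Ω → (Fin d → ℝ)) (S Y : Ω → Bool)
    (hX : Measurable X) (hS : Measurable S) (hY : Measurable Y)
    (hSnd : 0 < P {ω | S ω = true} ∧ P {ω | S ω = true} < 1)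
    (hYnd : 0 < P {ω | Y ω = true} ∧ P {ω | Y ω = true} < 1)
    (η : (Fin d → ℝ) → Bool → ℝ)
    (hηm : Measurable (fun p : (Fin d → ℝ) × Bool => η p.1 p.2))
    (hη01 : ∀ x s, η x s ∈ Icc (0:ℝ) 1)
    (hreg : ∀ φ : (Fin d → ℝ) × Bool → ℝ, Measurable φ → (∃ C, ∀ z, |φ z| ≤ C) →
      ∫ ω, (if Y ω then (1:ℝ) else 0) * φ (X ω, S ω) ∂P
        = ∫ ω, η (X ω) (S ω) * φ (X ω, S ω) ∂P)
    -- Assumption 1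
    (hcont : ∀ s : Bool, ContinuousOn
      (fun t : ℝ =>
        (ProbabilityTheory.cond P {ω | S ω = s} {ω | η (X ω) (S ω) ≤ t}).toReal)
      (Ioo (0:ℝ) 1))
    (hhalf : ∀ s : Bool,
      0 < ProbabilityTheory.cond P {ω | S ω = s} {ω | 1 / 2 ≤ η (X ω) s})
    -- an optimal Equal Opportunity classifier g*
    (gs : (Fin d → ℝ) → Bool → Bool)
    (hgsm : Measurable (fun p : (Fin d → ℝ) × Bool => gs p.1 p.2))
    (hgsfair :
      ProbabilityTheory.cond P {ω | S ω = true ∧ Y ω = true} {ω | gs (X ω) (S ω) = true}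
        = ProbabilityTheory.cond P {ω | S ω = false ∧ Y ω = true}
            {ω | gs (X ω) (S ω) = true})
    (hgsopt : ∀ g : (Fin d → ℝ) → Bool → Bool,
      Measurable (fun p : (Fin d → ℝ) × Bool => g p.1 p.2) →
      ProbabilityTheory.cond P {ω | S ω = true ∧ Y ω = true} {ω | g (X ω) (S ω) = true}
        = ProbabilityTheory.cond P {ω | S ω = false ∧ Y ω = true}
            {ω | g (X ω) (S ω) = true} →
      (P {ω | gs (X ω) (S ω) ≠ Y ω}).toReal ≤ (P {ω | g (X ω) (S ω) ≠ Y ω}).toReal)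
    -- the sequence of training-sample spaces and estimators
    (T : ℕ → Type*) [∀ n, MeasurableSpace (T n)]
    (Q : ∀ n, Measure (T n)) (hQ : ∀ n, IsProbabilityMeasure (Q n))
    (ηh : ∀ n, T n → (Fin d → ℝ) → Bool → ℝ)
    (hηhm : ∀ n, Measurable (fun p : T n × ((Fin d → ℝ) × Bool) => ηh n p.1 p.2.1 p.2.2))
    (hηh01 : ∀ n τ x s, ηh n τ x s ∈ Icc (0:ℝ) 1)
    -- (i) L¹-consistency
    (hL1 : ∀ s : Bool, Tendsto
      (fun n => ∫ τ, (∫ ω, |η (X ω) s - ηh n τ (X ω) s|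
          ∂(ProbabilityTheory.cond P {ω | S ω = s})) ∂(Q n))
      atTop (nhds 0))
    -- (ii) a.e. positivity of the estimated conditional means
    (hpos : ∀ n, ∀ᵐ τ ∂(Q n), ∀ s : Bool,
      0 < ∫ ω, ηh n τ (X ω) s ∂(ProbabilityTheory.cond P {ω | S ω = s}))
    -- (iii) the thresholds and pseudo-oracle classifiers
    (θt : ∀ n, T n → ℝ) (hθtm : ∀ n, Measurable (θt n))
    (hθtb : ∀ n τ, θt n τ ∈ Icc (-2 : ℝ) 2)
    (G : ∀ n, T n → (Fin d → ℝ) → Bool → Bool)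
    (hGm : ∀ n, Measurable (fun p : T n × ((Fin d → ℝ) × Bool) => G n p.1 p.2.1 p.2.2))
    (hGdef : ∀ n τ x,
      (G n τ x true = true
        ↔ 0 ≤ (P {ω | S ω = true}).toReal * (2 * ηh n τ x true - 1)
            - θt n τ * ηh n τ x true
              / (∫ ω, ηh n τ (X ω) true ∂(ProbabilityTheory.cond P {ω | S ω = true})))
      ∧ (G n τ x false = true
        ↔ 0 ≤ (P {ω | S ω = false}).toReal * (2 * ηh n τ x false - 1)
            + θt n τ * ηh n τ x false
              / (∫ ω, ηh n τ (X ω) false ∂(ProbabilityTheory.cond P {ω | S ω = false}))))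
    (hbal : ∀ n, ∀ᵐ τ ∂(Q n),
      (∫ ω, ηh n τ (X ω) true * (if G n τ (X ω) true then (1:ℝ) else 0)
          ∂(ProbabilityTheory.cond P {ω | S ω = true}))
        / (∫ ω, ηh n τ (X ω) true ∂(ProbabilityTheory.cond P {ω | S ω = true}))
      = (∫ ω, ηh n τ (X ω) false * (if G n τ (X ω) false then (1:ℝ) else 0)
          ∂(ProbabilityTheory.cond P {ω | S ω = false}))
        / (∫ ω, ηh n τ (X ω) false ∂(ProbabilityTheory.cond P {ω | S ω = false}))) :
    limsup (fun n => ∫ τ, (P {ω | G n τ (X ω) (S ω) ≠ Y ω}).toReal ∂(Q n)) atTop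
      ≤ (P {ω | gs (X ω) (S ω) ≠ Y ω}).toReal :=
  stmt_18_general P X S Y hX hS hY hSnd η hηm hη01 hreg hhalf gs hgsm hgsfair T Q hQ ηh hηhm hηh01
    hL1 hpos θt hθtb G hGm hGdef hbal
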